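/- Every smooth vector field v on ℝ³ that is an infinitesimal symmetry of the hyperbolic system Σ_H has the form v(x,y,w) = (a·y + b, a·x + c, a) for some real constants a, b, c; equivalently, the Lie algebra of infinitesimal symmetries of Σ_H is exactly the real linear span of the vector fields (1,0,0), (0,1,0), and (y, x, 1). -/

import Mathlib

open Real Set

/-- The state space ℝ³ with coordinates (x, y, w). -/
abbrev V3 : Type := Fin 3 → ℝ

/-- Lie bracket of vector fields: [v,u](ξ) = Du(ξ)·v(ξ) − Dv(ξ)·u(ξ). -/
noncomputable def lieBr (v u : V3 → V3) : V3 → V3 :=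
  fun ξ => fderiv ℝ u ξ (v ξ) - fderiv ℝ v ξ (u ξ)

/-- `v` is an infinitesimal symmetry of the control-affine system `(f, g)` on `U`. -/
def InfSymmOn (U : Set V3) (f g v : V3 → V3) : Prop :=
  ∀ ξ ∈ U, (∃ c : ℝ, lieBr v g ξ = c • g ξ) ∧ (∃ c : ℝ, lieBr v f ξ = c • g ξ)

/-- The control vector field g₀ = ∂/∂w. -/
def g0 : V3 → V3 := fun _ => ![0, 0, 1]

/-- Drift of the hyperbolic system Σ_H. -/
noncomputable def fH : V3 → V3 := fun ξ => ![Real.cosh (ξ 2), Real.sinh (ξ 2), 0]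

namespace SymHyp

noncomputable abbrev pr (i : Fin 3) : V3 →L[ℝ] ℝ := ContinuousLinearMap.proj i

lemma fderiv_comp_apply {v : V3 → V3} {ξ : V3} (hv : DifferentiableAt ℝ v ξ)
    (i : Fin 3) (h : V3) :
    fderiv ℝ (fun ζ => v ζ i) ξ h = fderiv ℝ v ξ h i := by
  have h1 : HasFDerivAt (fun ζ => v ζ i) ((pr i).comp (fderiv ℝ v ξ)) ξ :=
    hasFDerivAt_pi'.1 hv.hasFDerivAt i
  rw [h1.fderiv]; rfl

lemma hasFDerivAt_fH (ξ : V3) :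
    HasFDerivAt fH
      (ContinuousLinearMap.pi ![Real.sinh (ξ 2) • pr 2, Real.cosh (ξ 2) • pr 2, 0]) ξ := by
  apply hasFDerivAt_pi''
  intro i
  fin_cases i <;>
    simp only [fH, Matrix.cons_val_zero, Matrix.cons_val_one, Matrix.head_cons,
      Matrix.cons_val_two, Matrix.tail_cons, ContinuousLinearMap.proj_pi, Fin.isValue]
  · exact (hasFDerivAt_apply 2 ξ).cosh
  · exact (hasFDerivAt_apply 2 ξ).sinh
  · exact hasFDerivAt_const 0 ξ

lemma line_hasDerivAt (ξ d : V3) (t : ℝ) : HasDerivAt (fun t : ℝ => ξ + t • d) d t := by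
  simpa using ((hasDerivAt_id t).smul_const d).const_add ξ

lemma const_along {f : V3 → ℝ} (hf : Differentiable ℝ f) (d : V3)
    (hzero : ∀ ζ, fderiv ℝ f ζ d = 0) (ξ η : V3) (h : ∃ s : ℝ, η = ξ + s • d) :
    f η = f ξ := by
  obtain ⟨s, rfl⟩ := h
  have key : ∀ t : ℝ, HasDerivAt (fun t : ℝ => f (ξ + t • d)) 0 t := by
    intro t
    have h2 := (hf (ξ + t • d)).hasFDerivAt.comp_hasDerivAt t (line_hasDerivAt ξ d t)
    rw [hzero] at h2; exact h2
  have h3 := is_const_of_deriv_eq_zero (fun t => (key t).differentiableAt)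
    (fun t => (key t).deriv) s 0
  simpa using h3

lemma fderiv_reparam {f : V3 → ℝ} (hf : Differentiable ℝ f) (R : V3 →L[ℝ] V3)
    (hR : ∀ ζ, f (R ζ) = f ζ) (ξ h : V3) :
    fderiv ℝ f ξ h = fderiv ℝ f (R ξ) (R h) := by
  have key : HasFDerivAt f ((fderiv ℝ f (R ξ)).comp R) ξ := by
    have h2 := (hf (R ξ)).hasFDerivAt.comp ξ R.hasFDerivAt
    have h3 : f ∘ R = f := funext hR
    rwa [h3] at h2
  rw [key.fderiv]; rfl

lemma linear_of_hasDerivAt {φ : ℝ → ℝ} {A : ℝ} (h : ∀ t, HasDerivAt φ A t) (t : ℝ) :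
    φ t = A * t + φ 0 := by
  have h2 : ∀ s : ℝ, HasDerivAt (fun s => φ s - A * s) 0 s := fun s => by
    exact ((h s).sub ((hasDerivAt_id s).const_mul A)).congr_deriv (by ring)
  have h3 := is_const_of_deriv_eq_zero (fun s => (h2 s).differentiableAt)
    (fun s => (h2 s).deriv) t 0
  simp only [mul_zero, sub_zero] at h3
  linarith

noncomputable def R2 : V3 →L[ℝ] V3 := ContinuousLinearMap.pi ![pr 0, pr 1, 0]
noncomputable def Rx : V3 →L[ℝ] V3 := ContinuousLinearMap.pi ![pr 0, 0, 0]
noncomputable def Ry : V3 →L[ℝ] V3 := ContinuousLinearMap.pi ![0, pr 1, 0]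

lemma R2_apply (ξ : V3) : R2 ξ = ![ξ 0, ξ 1, 0] := by
  funext i; fin_cases i <;> simp [R2, ContinuousLinearMap.pi_apply]
lemma Rx_apply (ξ : V3) : Rx ξ = ![ξ 0, 0, 0] := by
  funext i; fin_cases i <;> simp [Rx, ContinuousLinearMap.pi_apply]
lemma Ry_apply (ξ : V3) : Ry ξ = ![0, ξ 1, 0] := by
  funext i; fin_cases i <;> simp [Ry, ContinuousLinearMap.pi_apply]
lemma eta3 (ξ : V3) : ![ξ 0, ξ 1, ξ 2] = ξ := by
  funext i; fin_cases i <;> rfl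

/-- the derivative CLM for the affine field. -/
noncomputable def Ma (a : ℝ) : V3 →L[ℝ] V3 :=
  ContinuousLinearMap.pi ![a • pr 1, a • pr 0, 0]

lemma hasFDerivAt_affine (a b c : ℝ) (ξ : V3) :
    HasFDerivAt (fun ξ : V3 => (![a * ξ 1 + b, a * ξ 0 + c, a] : V3)) (Ma a) ξ := by
  apply hasFDerivAt_pi''
  intro i
  fin_cases i <;>
    simp only [Ma, Matrix.cons_val_zero, Matrix.cons_val_one, Matrix.head_cons,
      Matrix.cons_val_two, Matrix.tail_cons, ContinuousLinearMap.proj_pi, Fin.isValue]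
  · exact ((hasFDerivAt_apply 1 ξ).const_mul a).add_const b
  · exact ((hasFDerivAt_apply 0 ξ).const_mul a).add_const c
  · exact hasFDerivAt_const a ξ

end SymHyp

open SymHyp

/-- the Lie algebra of infinitesimal symmetries of Σ_H is exactly the real
linear span of (1,0,0), (0,1,0), (y,x,1): every smooth infinitesimal symmetry has the
form v(x,y,w) = (a·y + b, a·x + c, a), and conversely. -/
theorem symmetry_algebra_of_hyperbolic :
    {v : V3 → V3 | ContDiff ℝ (⊤ : ℕ∞) v ∧ InfSymmOn univ fH g0 v} =
      {v : V3 → V3 | ∃ a b c : ℝ, v = fun ξ => ![a * ξ 1 + b, a * ξ 0 + c, a]} := by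
  ext v
  simp only [mem_setOf_eq]
  constructor
  · rintro ⟨hv, hs⟩
    have hd : Differentiable ℝ v := hv.differentiable (by simp)
    have hdi : ∀ i : Fin 3, Differentiable ℝ (fun ξ => v ξ i) :=
      fun i ξ => differentiableAt_pi.1 (hd ξ) i
    -- the g0 condition : w-derivatives of the first two components vanish
    have hW : ∀ i : Fin 3, i = 0 ∨ i = 1 →
        ∀ ξ : V3, fderiv ℝ (fun ζ => v ζ i) ξ ![0, 0, 1] = 0 := by
      intro i hi ξ
      obtain ⟨c, hc⟩ := (hs ξ (mem_univ ξ)).1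
      have h1 := congrFun hc i
      have hg0 : fderiv ℝ g0 ξ = 0 := by unfold g0; exact fderiv_const_apply _
      simp only [lieBr, Pi.sub_apply, hg0, ContinuousLinearMap.zero_apply, Pi.zero_apply,
        zero_sub] at h1
      rw [fderiv_comp_apply (hd ξ) i]
      rcases hi with rfl | rfl <;> simp [g0] at h1 ⊢ <;> linarith
    -- components 0 and 1 are independent of w
    have hWconst : ∀ i : Fin 3, i = 0 ∨ i = 1 → ∀ ξ : V3, v ξ i = v ![ξ 0, ξ 1, 0] i := by
      intro i hi ξ
      refine const_along (hdi i) ![0, 0, 1] (hW i hi) ![ξ 0, ξ 1, 0] ξ ⟨ξ 2, ?_⟩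
      funext j; fin_cases j <;> simp
    -- derivatives of the first two components are independent of w
    have hDind : ∀ i : Fin 3, i = 0 ∨ i = 1 → ∀ ξ h : V3,
        fderiv ℝ (fun ζ => v ζ i) ξ h = fderiv ℝ (fun ζ => v ζ i) ![ξ 0, ξ 1, 0] (R2 h) := by
      intro i hi ξ h
      have hR : ∀ ζ : V3, (fun ζ => v ζ i) (R2 ζ) = v ζ i := by
        intro ζ; rw [R2_apply]; exact (hWconst i hi ζ).symm
      have := fderiv_reparam (hdi i) R2 hR ξ h
      rwa [R2_apply ξ] at this
    -- the fH condition, first two components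
    have hE : ∀ i : Fin 3, (hi : i = 0 ∨ i = 1) → ∀ ξ : V3,
        (if i = 0 then Real.sinh (ξ 2) else Real.cosh (ξ 2)) * v ξ 2 =
          Real.cosh (ξ 2) * fderiv ℝ (fun ζ => v ζ i) ξ ![1, 0, 0] +
          Real.sinh (ξ 2) * fderiv ℝ (fun ζ => v ζ i) ξ ![0, 1, 0] := by
      intro i hi ξ
      obtain ⟨c, hc⟩ := (hs ξ (mem_univ ξ)).2
      have h1 := congrFun hc i
      have hfH : fH ξ = Real.cosh (ξ 2) • ![1, 0, 0] + Real.sinh (ξ 2) • ![0, 1, 0] := by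
        funext j; fin_cases j <;> simp [fH]
      have h2 : fderiv ℝ v ξ (fH ξ) i =
          Real.cosh (ξ 2) * fderiv ℝ (fun ζ => v ζ i) ξ ![1, 0, 0] +
          Real.sinh (ξ 2) * fderiv ℝ (fun ζ => v ζ i) ξ ![0, 1, 0] := by
        rw [← fderiv_comp_apply (hd ξ) i, hfH, map_add, map_smul, map_smul]
        simp [smul_eq_mul]
      simp only [lieBr, Pi.sub_apply, (hasFDerivAt_fH ξ).fderiv, h2] at h1
      rcases hi with rfl | rfl <;>
        simp [g0, ContinuousLinearMap.pi_apply, smul_eq_mul] at h1 ⊢ <;> linarith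
    -- pointwise analysis at each (x, y)
    have key : ∀ x y : ℝ,
        fderiv ℝ (fun ζ => v ζ 0) ![x, y, 0] ![1, 0, 0] = 0 ∧
        fderiv ℝ (fun ζ => v ζ 1) ![x, y, 0] ![0, 1, 0] = 0 ∧
        fderiv ℝ (fun ζ => v ζ 0) ![x, y, 0] ![0, 1, 0] =
          fderiv ℝ (fun ζ => v ζ 1) ![x, y, 0] ![1, 0, 0] ∧
        ∀ w : ℝ, v ![x, y, w] 2 = fderiv ℝ (fun ζ => v ζ 1) ![x, y, 0] ![1, 0, 0] := by
      intro x y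
      have he0 : (R2 ![1, 0, 0] : V3) = ![1, 0, 0] := by rw [R2_apply]; funext j; fin_cases j <;> simp
      have he1 : (R2 ![0, 1, 0] : V3) = ![0, 1, 0] := by rw [R2_apply]; funext j; fin_cases j <;> simp
      have hxy : ∀ w : ℝ, (![(![x, y, w] : V3) 0, (![x, y, w] : V3) 1, 0] : V3) = ![x, y, 0] := by
        intro w; simp
      have Ea : ∀ w : ℝ, Real.sinh w * v ![x, y, w] 2 =
          Real.cosh w * fderiv ℝ (fun ζ => v ζ 0) ![x, y, 0] ![1, 0, 0] +
          Real.sinh w * fderiv ℝ (fun ζ => v ζ 0) ![x, y, 0] ![0, 1, 0] := by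
        intro w
        have h1 := hE 0 (Or.inl rfl) ![x, y, w]
        rw [hDind 0 (Or.inl rfl) ![x, y, w] ![1, 0, 0], hDind 0 (Or.inl rfl) ![x, y, w] ![0, 1, 0],
          he0, he1, hxy w] at h1
        simpa using h1
      have Eb : ∀ w : ℝ, Real.cosh w * v ![x, y, w] 2 =
          Real.cosh w * fderiv ℝ (fun ζ => v ζ 1) ![x, y, 0] ![1, 0, 0] +
          Real.sinh w * fderiv ℝ (fun ζ => v ζ 1) ![x, y, 0] ![0, 1, 0] := by
        intro w
        have h1 := hE 1 (Or.inr rfl) ![x, y, w]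
        rw [hDind 1 (Or.inr rfl) ![x, y, w] ![1, 0, 0], hDind 1 (Or.inr rfl) ![x, y, w] ![0, 1, 0],
          he0, he1, hxy w] at h1
        simpa using h1
      set a := fderiv ℝ (fun ζ => v ζ 0) ![x, y, 0] ![1, 0, 0] with ha_def
      set b := fderiv ℝ (fun ζ => v ζ 0) ![x, y, 0] ![0, 1, 0] with hb_def
      set c := fderiv ℝ (fun ζ => v ζ 1) ![x, y, 0] ![1, 0, 0] with hc_def
      set d := fderiv ℝ (fun ζ => v ζ 1) ![x, y, 0] ![0, 1, 0] with hd_def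
      have hsinh1 : Real.sinh 1 ≠ 0 := ne_of_gt (by positivity)
      have hcosh1 : Real.cosh 1 ≠ 0 := ne_of_gt (Real.cosh_pos 1)
      have hsinhm1 : Real.sinh (-1 : ℝ) ≠ 0 := by rw [Real.sinh_neg]; exact neg_ne_zero.2 hsinh1
      have ha : a = 0 := by have := Ea 0; simp at this; linarith
      have hV1 : v ![x, y, 1] 2 = b :=
        mul_left_cancel₀ hsinh1 (by have := Ea 1; rw [ha] at this; linarith)
      have hVm1 : v ![x, y, -1] 2 = b :=
        mul_left_cancel₀ hsinhm1 (by have := Ea (-1); rw [ha] at this; linarith)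
      have hEb1 := Eb 1
      have hEbm1 := Eb (-1)
      rw [hV1] at hEb1
      rw [hVm1, Real.sinh_neg, Real.cosh_neg] at hEbm1
      have hd0 : d = 0 := by
        have h6 : 2 * (Real.sinh 1 * d) = 0 := by linarith
        have := mul_eq_zero.1 h6
        rcases this with h | h
        · norm_num at h
        · exact (mul_eq_zero.1 h).resolve_left hsinh1
      have hbc : b = c := by
        rw [hd0] at hEb1
        have := mul_right_cancel₀ hcosh1 (by linarith : b * Real.cosh 1 = c * Real.cosh 1)
        exact this
      refine ⟨ha, hd0, by rw [hbc], ?_⟩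
      intro w
      have := Eb w
      rw [hd0] at this
      have hcw : Real.cosh w ≠ 0 := ne_of_gt (Real.cosh_pos w)
      have : Real.cosh w * v ![x, y, w] 2 = Real.cosh w * c := by linarith
      exact mul_left_cancel₀ hcw this
    -- globalize the four facts
    have he0 : (R2 ![1, 0, 0] : V3) = ![1, 0, 0] := by rw [R2_apply]; funext j; fin_cases j <;> simp
    have he1 : (R2 ![0, 1, 0] : V3) = ![0, 1, 0] := by rw [R2_apply]; funext j; fin_cases j <;> simp
    have hDx0 : ∀ ζ : V3, fderiv ℝ (fun ζ => v ζ 0) ζ ![1, 0, 0] = 0 := by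
      intro ζ
      rw [hDind 0 (Or.inl rfl) ζ ![1, 0, 0], he0]
      exact (key (ζ 0) (ζ 1)).1
    have hDy1 : ∀ ζ : V3, fderiv ℝ (fun ζ => v ζ 1) ζ ![0, 1, 0] = 0 := by
      intro ζ
      rw [hDind 1 (Or.inr rfl) ζ ![0, 1, 0], he1]
      exact (key (ζ 0) (ζ 1)).2.1
    have hsym' : ∀ ζ : V3, fderiv ℝ (fun ζ => v ζ 0) ζ ![0, 1, 0] =
        fderiv ℝ (fun ζ => v ζ 1) ζ ![1, 0, 0] := by
      intro ζ
      rw [hDind 0 (Or.inl rfl) ζ ![0, 1, 0], hDind 1 (Or.inr rfl) ζ ![1, 0, 0], he0, he1]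
      exact (key (ζ 0) (ζ 1)).2.2.1
    have hv2 : ∀ ζ : V3, v ζ 2 = fderiv ℝ (fun ζ => v ζ 1) ![ζ 0, ζ 1, 0] ![1, 0, 0] := by
      intro ζ
      have := (key (ζ 0) (ζ 1)).2.2.2 (ζ 2)
      rwa [eta3 ζ] at this
    -- v⁰ depends only on y, v¹ only on x
    have hRy0 : ∀ ζ : V3, (fun ζ => v ζ 0) (Ry ζ) = v ζ 0 := by
      intro ζ
      have h1 : v ζ 0 = v ![ζ 0, ζ 1, 0] 0 := hWconst 0 (Or.inl rfl) ζ
      have h2 : v ![ζ 0, ζ 1, 0] 0 = v ![0, ζ 1, 0] 0 := by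
        refine const_along (hdi 0) ![1, 0, 0] hDx0 ![0, ζ 1, 0] _ ⟨ζ 0, ?_⟩
        funext j; fin_cases j <;> simp
      rw [Ry_apply, h1, h2]
    have hRx1 : ∀ ζ : V3, (fun ζ => v ζ 1) (Rx ζ) = v ζ 1 := by
      intro ζ
      have h1 : v ζ 1 = v ![ζ 0, ζ 1, 0] 1 := hWconst 1 (Or.inr rfl) ζ
      have h2 : v ![ζ 0, ζ 1, 0] 1 = v ![ζ 0, 0, 0] 1 := by
        refine const_along (hdi 1) ![0, 1, 0] hDy1 ![ζ 0, 0, 0] _ ⟨ζ 1, ?_⟩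
        funext j; fin_cases j <;> simp
      rw [Rx_apply, h1, h2]
    have hRye1 : (Ry ![0, 1, 0] : V3) = ![0, 1, 0] := by
      rw [Ry_apply]; funext j; fin_cases j <;> simp
    have hRxe0 : (Rx ![1, 0, 0] : V3) = ![1, 0, 0] := by
      rw [Rx_apply]; funext j; fin_cases j <;> simp
    have claim : ∀ x y : ℝ, fderiv ℝ (fun ζ => v ζ 0) ![0, y, 0] ![0, 1, 0] =
        fderiv ℝ (fun ζ => v ζ 1) ![x, 0, 0] ![1, 0, 0] := by
      intro x y
      have h1 := hsym' ![x, y, 0]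
      have h2 := fderiv_reparam (hdi 0) Ry hRy0 ![x, y, 0] ![0, 1, 0]
      have h3 := fderiv_reparam (hdi 1) Rx hRx1 ![x, y, 0] ![1, 0, 0]
      rw [hRye1, Ry_apply] at h2
      rw [hRxe0, Rx_apply] at h3
      simp only [Matrix.cons_val_zero, Matrix.cons_val_one, Matrix.head_cons] at h2 h3
      rw [← h2, ← h3]
      exact h1
    have hA1 : ∀ x : ℝ, fderiv ℝ (fun ζ => v ζ 1) ![x, 0, 0] ![1, 0, 0] =
        fderiv ℝ (fun ζ => v ζ 1) ![0, 0, 0] ![1, 0, 0] := by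
      intro x
      have h0 : (0 : ℝ) = 0 := rfl
      exact (claim x 0).symm.trans (claim 0 0)
    have hA2 : ∀ y : ℝ, fderiv ℝ (fun ζ => v ζ 0) ![0, y, 0] ![0, 1, 0] =
        fderiv ℝ (fun ζ => v ζ 1) ![0, 0, 0] ![1, 0, 0] :=
      fun y => (claim 0 y).trans (hA1 0)
    have hDy0A : ∀ ζ : V3, fderiv ℝ (fun ζ => v ζ 0) ζ ![0, 1, 0] =
        fderiv ℝ (fun ζ => v ζ 1) ![0, 0, 0] ![1, 0, 0] := by
      intro ζ
      have h2 := fderiv_reparam (hdi 0) Ry hRy0 ζ ![0, 1, 0]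
      rw [hRye1, Ry_apply] at h2
      exact h2.trans (hA2 (ζ 1))
    have hDx1A : ∀ ζ : V3, fderiv ℝ (fun ζ => v ζ 1) ζ ![1, 0, 0] =
        fderiv ℝ (fun ζ => v ζ 1) ![0, 0, 0] ![1, 0, 0] := by
      intro ζ
      have h3 := fderiv_reparam (hdi 1) Rx hRx1 ζ ![1, 0, 0]
      rw [hRxe0, Rx_apply] at h3
      exact h3.trans (hA1 (ζ 0))
    have hv2A : ∀ ζ : V3, v ζ 2 = fderiv ℝ (fun ζ => v ζ 1) ![0, 0, 0] ![1, 0, 0] :=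
      fun ζ => (hv2 ζ).trans (hDx1A ![ζ 0, ζ 1, 0])
    -- derive the affine formulas
    have hφ0 : ∀ t : ℝ, HasDerivAt (fun t : ℝ => v ((![0, 0, 0] : V3) + t • ![0, 1, 0]) 0)
        (fderiv ℝ (fun ζ => v ζ 1) ![0, 0, 0] ![1, 0, 0]) t := by
      intro t
      have h2 := (hdi 0 _).hasFDerivAt.comp_hasDerivAt t (line_hasDerivAt ![0, 0, 0] ![0, 1, 0] t)
      rw [hDy0A] at h2; exact h2
    have hφ1 : ∀ t : ℝ, HasDerivAt (fun t : ℝ => v ((![0, 0, 0] : V3) + t • ![1, 0, 0]) 1)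
        (fderiv ℝ (fun ζ => v ζ 1) ![0, 0, 0] ![1, 0, 0]) t := by
      intro t
      have h2 := (hdi 1 _).hasFDerivAt.comp_hasDerivAt t (line_hasDerivAt ![0, 0, 0] ![1, 0, 0] t)
      rw [hDx1A] at h2; exact h2
    have hval0 : ∀ ζ : V3, v ζ 0 =
        fderiv ℝ (fun ζ => v ζ 1) ![0, 0, 0] ![1, 0, 0] * ζ 1 + v ![0, 0, 0] 0 := by
      intro ζ
      have h1 := linear_of_hasDerivAt hφ0 (ζ 1)
      have e1eq : (![0, 0, 0] : V3) + ζ 1 • ![0, 1, 0] = ![0, ζ 1, 0] := by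
        funext j; fin_cases j <;> simp
      have e0eq : (![0, 0, 0] : V3) + (0 : ℝ) • ![0, 1, 0] = ![0, 0, 0] := by
        funext j; fin_cases j <;> simp
      rw [e1eq, e0eq] at h1
      have h2 : v ζ 0 = v ![0, ζ 1, 0] 0 := by
        have := hRy0 ζ; rw [Ry_apply] at this; exact this.symm
      rw [h2, h1]
    have hval1 : ∀ ζ : V3, v ζ 1 =
        fderiv ℝ (fun ζ => v ζ 1) ![0, 0, 0] ![1, 0, 0] * ζ 0 + v ![0, 0, 0] 1 := by
      intro ζ
      have h1 := linear_of_hasDerivAt hφ1 (ζ 0)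
      have e1eq : (![0, 0, 0] : V3) + ζ 0 • ![1, 0, 0] = ![ζ 0, 0, 0] := by
        funext j; fin_cases j <;> simp
      have e0eq : (![0, 0, 0] : V3) + (0 : ℝ) • ![1, 0, 0] = ![0, 0, 0] := by
        funext j; fin_cases j <;> simp
      rw [e1eq, e0eq] at h1
      have h2 : v ζ 1 = v ![ζ 0, 0, 0] 1 := by
        have := hRx1 ζ; rw [Rx_apply] at this; exact this.symm
      rw [h2, h1]
    refine ⟨fderiv ℝ (fun ζ => v ζ 1) ![0, 0, 0] ![1, 0, 0], v ![0, 0, 0] 0, v ![0, 0, 0] 1, ?_⟩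
    funext ζ
    funext i
    fin_cases i
    · simpa using hval0 ζ
    · simpa using hval1 ζ
    · simpa using hv2A ζ
  · rintro ⟨a, b, c, rfl⟩
    constructor
    · rw [contDiff_pi]
      intro i
      have h0 : ContDiff ℝ (⊤ : ℕ∞) (fun ξ : V3 => ξ 0) := (ContinuousLinearMap.proj 0 : V3 →L[ℝ] ℝ).contDiff
      have h1 : ContDiff ℝ (⊤ : ℕ∞) (fun ξ : V3 => ξ 1) := (ContinuousLinearMap.proj 1 : V3 →L[ℝ] ℝ).contDiff
      fin_cases i <;> simp only [Matrix.cons_val_zero, Matrix.cons_val_one, Matrix.head_cons,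
        Matrix.cons_val_two, Matrix.tail_cons, Fin.isValue]
      · exact (contDiff_const.mul h1).add contDiff_const
      · exact (contDiff_const.mul h0).add contDiff_const
      · exact contDiff_const
    · intro ξ _
      have hfd := (hasFDerivAt_affine a b c ξ).fderiv
      constructor
      · refine ⟨0, ?_⟩
        have hg0 : fderiv ℝ g0 ξ = 0 := by unfold g0; exact fderiv_const_apply _
        funext i
        simp only [lieBr, hfd, hg0, Pi.sub_apply, ContinuousLinearMap.zero_apply, Pi.zero_apply]
        fin_cases i <;>
          simp [Ma, g0, ContinuousLinearMap.pi_apply, Matrix.cons_val_zero, Matrix.cons_val_one,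
            Matrix.head_cons]
      · refine ⟨0, ?_⟩
        funext i
        simp only [lieBr, hfd, Pi.sub_apply, (hasFDerivAt_fH ξ).fderiv]
        fin_cases i <;>
          simp [Ma, g0, fH, ContinuousLinearMap.pi_apply, Matrix.cons_val_zero, Matrix.cons_val_one,
            Matrix.head_cons, mul_comm]
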